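/- Let f ∈ ℝ[x₁,…,xₙ] satisfy conditions (C1), (C2) and (C3) and let λ_f be a map of minimal barycentric coordinates of f. If Σ_{α*∈D(f), α*∉(2ℕ₀)ⁿ} |f_{α*}|/Θ(f,λ_f,α*) − Σ_{α*∈D(f), α*∈(2ℕ₀)ⁿ} min{0, f_{α*}}/Θ(f,λ_f,α*) < 1, then f is coercive on ℝⁿ. -/

import Mathlib

open MvPolynomial Filter

noncomputable section

open scoped Classical

/-- The embedding of exponent vectors into `ℝⁿ`. -/
def expEmbed {n : ℕ} (α : Fin n →₀ ℕ) : Fin n → ℝ := fun i => (α i : ℝ)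

/-- The Newton polytope at infinity `New∞(f) = conv(A(f) ∪ {0})`. -/
def newtonInfty {n : ℕ} (f : MvPolynomial (Fin n) ℝ) : Set (Fin n → ℝ) :=
  convexHull ℝ (expEmbed '' ((insert 0 f.support : Finset (Fin n →₀ ℕ)) : Set (Fin n →₀ ℕ)))

/-- The vertex set `V₀(f)` of the Newton polytope at infinity, as a
finset of exponent vectors. -/
def V0 {n : ℕ} (f : MvPolynomial (Fin n) ℝ) : Finset (Fin n →₀ ℕ) :=
  (insert 0 f.support).filter fun α => expEmbed α ∈ Set.extremePoints ℝ (newtonInfty f)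

/-- The set `V(f) = V₀(f) \ {0}` of vertices at infinity. -/
def Vinf {n : ℕ} (f : MvPolynomial (Fin n) ℝ) : Finset (Fin n →₀ ℕ) := (V0 f).erase 0

/-- An exponent vector with all entries even, i.e. a member of `(2ℕ₀)ⁿ`. -/
def IsEvenExp {n : ℕ} (α : Fin n →₀ ℕ) : Prop := ∀ i, Even (α i)

/-- Condition (C1): `V(f) ⊆ (2ℕ₀)ⁿ`. -/
def CondC1 {n : ℕ} (f : MvPolynomial (Fin n) ℝ) : Prop := ∀ α ∈ Vinf f, IsEvenExp α

/-- Condition (C2): positive coefficients at all vertices at infinity. -/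
def CondC2 {n : ℕ} (f : MvPolynomial (Fin n) ℝ) : Prop := ∀ α ∈ Vinf f, 0 < f.coeff α

/-- Condition (C3): `V(f)` contains a vector `2 kᵢ eᵢ` for every `i`. -/
def CondC3 {n : ℕ} (f : MvPolynomial (Fin n) ℝ) : Prop :=
  ∀ i : Fin n, ∃ k : ℕ, 0 < k ∧ Finsupp.single i (2 * k) ∈ Vinf f

/-- An exponent vector of `f` is gem degenerate if it is no vertex at infinity but lies in
some nonempty face of `New∞(f)` not containing the origin. -/
def IsGemDegenerate {n : ℕ} (f : MvPolynomial (Fin n) ℝ) (α : Fin n →₀ ℕ) : Prop :=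
  α ∈ f.support ∧ α ∉ Vinf f ∧
    ∃ G : Set (Fin n → ℝ), G.Nonempty ∧ IsExtreme ℝ (newtonInfty f) G ∧
      (0 : Fin n → ℝ) ∉ G ∧ expEmbed α ∈ G

/-- The set `D(f)` of gem degenerate exponent vectors of `f`. -/
def Dfin {n : ℕ} (f : MvPolynomial (Fin n) ℝ) : Finset (Fin n →₀ ℕ) :=
  f.support.filter fun α => IsGemDegenerate f α

/-- `f` is gem regular if `D(f) = ∅`. -/
def GemRegular {n : ℕ} (f : MvPolynomial (Fin n) ℝ) : Prop := ∀ α, ¬ IsGemDegenerate f α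

/-- `V₀ᶜ(f) = A(f) \ V₀(f)`. -/
def V0c {n : ℕ} (f : MvPolynomial (Fin n) ℝ) : Finset (Fin n →₀ ℕ) := f.support \ V0 f

/-- A map of minimal barycentric coordinates of `f`. -/
def IsMinBary {n : ℕ} (f : MvPolynomial (Fin n) ℝ)
    (lam : (Fin n →₀ ℕ) → (Fin n →₀ ℕ) → ℝ) : Prop :=
  (∀ αs α, 0 ≤ lam αs α ∧ lam αs α ≤ 1) ∧
  ∀ αs ∈ V0c f, ∃ W : Finset (Fin n →₀ ℕ), W ⊆ V0 f ∧
    AffineIndependent ℝ (fun w : W => expEmbed (w : Fin n →₀ ℕ)) ∧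
    (∀ α ∈ W, 0 < lam αs α) ∧
    (∀ α ∈ V0 f, α ∉ W → lam αs α = 0) ∧
    (∑ α ∈ W, lam αs α) = 1 ∧
    (∑ α ∈ W, lam αs α • expEmbed α) = expEmbed αs

/-- `W_{α*}(λ_f)`, the minimal vertex representation of `α*` corresponding to `λ_f`. -/
def Wfin {n : ℕ} (f : MvPolynomial (Fin n) ℝ)
    (lam : (Fin n →₀ ℕ) → (Fin n →₀ ℕ) → ℝ) (αs : Fin n →₀ ℕ) : Finset (Fin n →₀ ℕ) :=
  (V0 f).filter fun α => 0 < lam αs α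

/-- The circuit number `Θ(f, λ_f, α*)`. -/
def circuitNumber {n : ℕ} (f : MvPolynomial (Fin n) ℝ)
    (lam : (Fin n →₀ ℕ) → (Fin n →₀ ℕ) → ℝ) (αs : Fin n →₀ ℕ) : ℝ :=
  ∏ α ∈ Wfin f lam αs, (f.coeff α / lam αs α) ^ (lam αs α)

/-- `g` is coercive on `ℝⁿ`: `g(x) → +∞` whenever `‖x‖ → +∞`. -/
def Coercive {n : ℕ} (g : (Fin n → ℝ) → ℝ) : Prop :=
  Tendsto g (comap (fun x : Fin n → ℝ => ‖x‖) atTop) atTop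

/-!
By (C1) and (C2) the vertices at infinity contribute `S(x) = ∑_{α ∈ V(f)} f_α |x|^α ≥ 0`, and by
(C3) `S(x) → ∞` as `‖x‖ → ∞`. For a gem degenerate `α*`, all of `W_{α*}` lies on a face avoiding
the origin, so weighted AM-GM gives `Θ(f, λ_f, α*) |x|^{α*} ≤ S(x)`; the gem degenerate terms are
therefore at least `-c S(x)`, where `c < 1` is the left-hand side of the hypothesis. Every other
`α* ∈ V₀ᶜ(f)` has a dilation `t α*`, `t > 1`, in `New∞(f)` (otherwise the smallest face through
`α*` would avoid the origin), which writes `α*` as a combination of `V(f)` of total weight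
`τ < 1`, and then `|x|^{α*} = O(S(x)^τ) = o(S(x))`. Hence `f(x) ≥ f_0 + (1 - c) S(x) + o(S(x))`.
-/

section ConvexGeometry

variable {E : Type*} [AddCommGroup E] [Module ℝ E]

lemma Convex.smul_add_smul_add_smul_mem {s : Set E} (hs : Convex ℝ s) {x y z : E}
    (hx : x ∈ s) (hy : y ∈ s) (hz : z ∈ s) {a b c : ℝ}
    (ha : 0 ≤ a) (hb : 0 ≤ b) (hc : 0 ≤ c) (habc : a + b + c = 1) :
    a • x + b • y + c • z ∈ s := by
  simpa [Fin.sum_univ_three] using hs.sum_mem (t := Finset.univ) (w := ![a, b, c])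
    (z := ![x, y, z]) (fun i _ => by fin_cases i <;> assumption)
    (by simp [Fin.sum_univ_three, habc]) (fun i _ => by fin_cases i <;> assumption)

/-- The smallest face of `s` containing `q`. -/
lemma Convex.isExtreme_setOf_add_smul_sub_mem {s : Set E} (hs : Convex ℝ s) {q : E}
    (hq : q ∈ s) : IsExtreme ℝ s {y ∈ s | ∃ ε > (0 : ℝ), q + ε • (q - y) ∈ s} := by
  refine ⟨fun y hy => hy.1, ?_⟩
  rintro x₁ hx₁ x₂ hx₂ _ ⟨-, ε, hε, hmem⟩ ⟨a, b, ha, hb, hab, rfl⟩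
  refine ⟨hx₁, ε * a / (1 + ε), by positivity, ?_⟩
  -- the prolongation beyond `q` away from `x₁` is a convex combination of the prolongation
  -- away from `a • x₁ + b • x₂`, of `x₂` and of `q`
  convert hs.smul_add_smul_add_smul_mem hmem hx₂ hq (a := 1 / (1 + ε)) (b := ε * b / (1 + ε))
    (c := ε * a / (1 + ε)) (by positivity) (by positivity) (by positivity)
    (by field_simp; linear_combination ε * hab) using 1
  rw [← sub_eq_zero]
  match_scalars <;> field_simp <;> ring

lemma IsExtreme.mem_of_sum_smul_mem {ι : Type*} {s G : Set E} (hs : Convex ℝ s)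
    (hG : IsExtreme ℝ s G) {t : Finset ι} {w : ι → ℝ} {z : ι → E} (hw : ∀ i ∈ t, 0 < w i)
    (hw₁ : ∑ i ∈ t, w i = 1) (hz : ∀ i ∈ t, z i ∈ s) (hG' : ∑ i ∈ t, w i • z i ∈ G)
    {i : ι} (hi : i ∈ t) : z i ∈ G := by
  classical
  rw [← Finset.add_sum_erase t _ hi] at hw₁ hG'
  rcases (t.erase i).eq_empty_or_nonempty with hr | hr
  · rw [hr, Finset.sum_empty, add_zero] at hw₁ hG'
    rwa [hw₁, one_smul] at hG'
  have hr₀ : 0 < ∑ j ∈ t.erase i, w j :=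
    Finset.sum_pos (fun j hj => hw j (Finset.mem_of_mem_erase hj)) hr
  refine hG.left_mem_of_mem_openSegment (hz i hi)
    (hs.centerMass_mem (fun j hj => (hw j (Finset.mem_of_mem_erase hj)).le) hr₀
      fun j hj => hz j (Finset.mem_of_mem_erase hj)) hG'
    ⟨w i, ∑ j ∈ t.erase i, w j, hw i hi, hr₀, hw₁, ?_⟩
  rw [Finset.centerMass, smul_smul, mul_inv_cancel₀ hr₀.ne', one_smul]

lemma zero_mem_extremePoints_of_nonneg [PartialOrder E] [IsOrderedAddMonoid E]
    [PosSMulMono ℝ E] {s : Set E} (h₀ : 0 ∈ s) (hs : ∀ x ∈ s, 0 ≤ x) :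
    0 ∈ s.extremePoints ℝ := by
  refine ⟨h₀, fun x₁ hx₁ x₂ hx₂ ⟨a, b, ha, hb, _, h⟩ => ?_⟩
  have h₁ := ((add_eq_zero_iff_of_nonneg (smul_nonneg ha.le (hs x₁ hx₁))
    (smul_nonneg hb.le (hs x₂ hx₂))).1 h).1
  exact (smul_eq_zero.1 h₁).resolve_left ha.ne'

lemma Set.Finite.convexHull_extremePoints_convexHull [TopologicalSpace E] [T2Space E]
    [IsTopologicalAddGroup E] [ContinuousSMul ℝ E] [LocallyConvexSpace ℝ E] {s : Set E}
    (hs : s.Finite) : convexHull ℝ ((convexHull ℝ s).extremePoints ℝ) = convexHull ℝ s := by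
  have hext : (convexHull ℝ s).extremePoints ℝ ⊆ s := extremePoints_convexHull_subset
  refine (convexHull_min extremePoints_subset (convex_convexHull ℝ s)).antisymm ?_
  calc convexHull ℝ s = closure (convexHull ℝ ((convexHull ℝ s).extremePoints ℝ)) :=
        (closure_convexHull_extremePoints (hs.isCompact_convexHull ℝ) (convex_convexHull ℝ s)).symm
    _ ⊆ _ := ((hs.subset hext).isClosed_convexHull ℝ).closure_subset

lemma exists_sum_smul_eq_of_mem_convexHull_image {ι : Type*} {t : Finset ι} {z : ι → E}
    (hz : Set.InjOn z t) {x : E} (hx : x ∈ convexHull ℝ (z '' t)) :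
    ∃ w : ι → ℝ, (∀ i ∈ t, 0 ≤ w i) ∧ ∑ i ∈ t, w i = 1 ∧ ∑ i ∈ t, w i • z i = x := by
  classical
  rw [← Finset.coe_image, Finset.mem_convexHull'] at hx
  obtain ⟨w, hw₀, hw₁, hwx⟩ := hx
  rw [Finset.sum_image hz] at hw₁ hwx
  exact ⟨w ∘ z, fun i hi => hw₀ _ (Finset.mem_image_of_mem z hi), hw₁, hwx⟩

end ConvexGeometry

section RealInequalities

open Asymptotics

lemma Real.prod_rpow_le_rpow_sum {ι : Type*} {s : Finset ι} {u μ : ι → ℝ}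
    (hu : ∀ i ∈ s, 0 ≤ u i) (hμ : ∀ i ∈ s, 0 ≤ μ i) :
    ∏ i ∈ s, u i ^ μ i ≤ (∑ i ∈ s, u i) ^ ∑ i ∈ s, μ i := by
  rw [Real.rpow_sum_of_nonneg (Finset.sum_nonneg hu) hμ]
  exact Finset.prod_le_prod (fun i hi => Real.rpow_nonneg (hu i hi) _) fun i hi =>
    Real.rpow_le_rpow (hu i hi) (Finset.single_le_sum hu hi) (hμ i hi)

lemma Real.prod_div_rpow_le_sum {ι : Type*} {s : Finset ι} {w c : ι → ℝ}
    (hw : ∀ i ∈ s, 0 < w i) (hw₁ : ∑ i ∈ s, w i = 1) (hc : ∀ i ∈ s, 0 ≤ c i) :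
    ∏ i ∈ s, (c i / w i) ^ w i ≤ ∑ i ∈ s, c i := by
  calc ∏ i ∈ s, (c i / w i) ^ w i ≤ ∑ i ∈ s, w i * (c i / w i) :=
        Real.geom_mean_le_arith_mean_weighted s w _ (fun i hi => (hw i hi).le) hw₁
          fun i hi => div_nonneg (hc i hi) (hw i hi).le
    _ = ∑ i ∈ s, c i := Finset.sum_congr rfl fun i hi => mul_div_cancel₀ _ (hw i hi).ne'

lemma Real.isLittleO_rpow_id_atTop {τ : ℝ} (hτ : τ < 1) :
    (fun u : ℝ => u ^ τ) =o[atTop] fun u => u := by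
  rw [isLittleO_iff_tendsto' ((eventually_ne_atTop 0).mono fun u hu h => absurd h hu)]
  refine (tendsto_rpow_neg_atTop (sub_pos.2 hτ)).congr' ?_
  filter_upwards [eventually_gt_atTop 0] with u hu
  rw [neg_sub, Real.rpow_sub hu, Real.rpow_one]

lemma Filter.Tendsto.mul_add_isLittleO_atTop {α : Type*} {l : Filter α} {S R : α → ℝ}
    (hS : Tendsto S l atTop) {c : ℝ} (hc : 0 < c) (hR : R =o[l] S) :
    Tendsto (fun x => c * S x + R x) l atTop :=
  (IsEquivalent.refl.add_isLittleO (hR.const_mul_right hc.ne')).symm.tendsto_atTop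
    (hS.const_mul_atTop hc)

end RealInequalities

section NewtonPolytope

variable {n : ℕ} {f : MvPolynomial (Fin n) ℝ}

lemma expEmbed_injective : Function.Injective (expEmbed (n := n)) :=
  fun _ _ h => Finsupp.ext fun i => by simpa [expEmbed] using congrFun h i

@[simp]
lemma expEmbed_zero : expEmbed (0 : Fin n →₀ ℕ) = 0 := by
  ext; simp [expEmbed]

lemma expEmbed_mem_newtonInfty {α : Fin n →₀ ℕ} (hα : α ∈ insert 0 f.support) :
    expEmbed α ∈ newtonInfty f :=
  subset_convexHull ℝ _ ⟨α, hα, rfl⟩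

lemma newtonInfty_subset_nonneg (f : MvPolynomial (Fin n) ℝ) : newtonInfty f ⊆ Set.Ici 0 :=
  convexHull_min (by rintro _ ⟨α, -, rfl⟩ i; exact Nat.cast_nonneg _) (convex_Ici 0)

lemma zero_mem_V0 (f : MvPolynomial (Fin n) ℝ) : 0 ∈ V0 f := by
  refine Finset.mem_filter.2 ⟨Finset.mem_insert_self _ _, ?_⟩
  rw [expEmbed_zero]
  exact zero_mem_extremePoints_of_nonneg
    (by simpa using expEmbed_mem_newtonInfty (Finset.mem_insert_self 0 f.support))
    (newtonInfty_subset_nonneg f)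

lemma V0_eq_insert_Vinf (f : MvPolynomial (Fin n) ℝ) : V0 f = insert 0 (Vinf f) :=
  (Finset.insert_erase (zero_mem_V0 f)).symm

lemma zero_notMem_Vinf (f : MvPolynomial (Fin n) ℝ) : 0 ∉ Vinf f :=
  Finset.notMem_erase 0 (V0 f)

lemma convexHull_V0 (f : MvPolynomial (Fin n) ℝ) :
    convexHull ℝ (expEmbed '' (V0 f : Set (Fin n →₀ ℕ))) = newtonInfty f := by
  have hext : (newtonInfty f).extremePoints ℝ = expEmbed '' (V0 f : Set (Fin n →₀ ℕ)) := by
    ext y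
    constructor
    · intro hy
      obtain ⟨α, hα, rfl⟩ := extremePoints_convexHull_subset hy
      exact ⟨α, Finset.mem_filter.2 ⟨hα, hy⟩, rfl⟩
    · rintro ⟨α, hα, rfl⟩
      exact (Finset.mem_filter.1 hα).2
  rw [← hext]
  exact ((Finset.finite_toSet _).image _).convexHull_extremePoints_convexHull

lemma exists_V0_weights {y : Fin n → ℝ} (hy : y ∈ newtonInfty f) :
    ∃ w : (Fin n →₀ ℕ) → ℝ, (∀ α ∈ V0 f, 0 ≤ w α) ∧ ∑ α ∈ V0 f, w α = 1 ∧
      ∑ α ∈ V0 f, w α • expEmbed α = y :=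
  exists_sum_smul_eq_of_mem_convexHull_image expEmbed_injective.injOn
    (by rwa [convexHull_V0])

lemma Dfin_subset_V0c (f : MvPolynomial (Fin n) ℝ) : Dfin f ⊆ V0c f := by
  intro α hα
  obtain ⟨hsupp, hV, G, -, -, hG₀, hαG⟩ := (Finset.mem_filter.1 hα).2
  refine Finset.mem_sdiff.2 ⟨hsupp, fun hV0 => hV (Finset.mem_erase.2 ⟨?_, hV0⟩)⟩
  rintro rfl
  exact hG₀ (by simpa using hαG)

/-- If no dilation `t • α`, `t > 1`, stays in `New∞(f)`, the smallest face through `α` avoids the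
origin, so `α` is gem degenerate. -/
lemma exists_one_lt_smul_mem_newtonInfty {α : Fin n →₀ ℕ} (hα : α ∈ V0c f)
    (hreg : α ∉ Dfin f) : ∃ t : ℝ, 1 < t ∧ t • expEmbed α ∈ newtonInfty f := by
  by_contra! hdil
  obtain ⟨hsupp, hV0⟩ := Finset.mem_sdiff.1 hα
  have hq := expEmbed_mem_newtonInfty (Finset.mem_insert_of_mem hsupp)
  set F := {y ∈ newtonInfty f | ∃ ε > (0 : ℝ), expEmbed α + ε • (expEmbed α - y) ∈ newtonInfty f}
  have hqF : expEmbed α ∈ F := ⟨hq, 1, one_pos, by simpa using hq⟩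
  have hdeg : IsGemDegenerate f α := by
    refine ⟨hsupp, fun hV => hV0 (Finset.mem_of_mem_erase hV), _, ⟨_, hqF⟩,
      (convex_convexHull ℝ _).isExtreme_setOf_add_smul_sub_mem hq, ?_, hqF⟩
    rintro ⟨-, ε, hε, h⟩
    refine hdil (1 + ε) (by linarith) ?_
    rwa [sub_zero, ← one_smul ℝ (expEmbed α), smul_smul, mul_one, ← add_smul] at h
  exact hreg (Finset.mem_filter.2 ⟨hsupp, hdeg⟩)

lemma exists_Vinf_weights_of_notMem_Dfin {α : Fin n →₀ ℕ} (hα : α ∈ V0c f)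
    (hreg : α ∉ Dfin f) :
    ∃ μ : (Fin n →₀ ℕ) → ℝ, (∀ β ∈ Vinf f, 0 ≤ μ β) ∧ ∑ β ∈ Vinf f, μ β < 1 ∧
      ∑ β ∈ Vinf f, μ β • expEmbed β = expEmbed α := by
  obtain ⟨t, ht, htα⟩ := exists_one_lt_smul_mem_newtonInfty hα hreg
  obtain ⟨w, hw₀, hw₁, hwα⟩ := exists_V0_weights htα
  have ht₀ : 0 < t := by linarith
  rw [V0_eq_insert_Vinf, Finset.sum_insert (zero_notMem_Vinf f)] at hw₁ hwα
  have hw₀' : 0 ≤ w 0 := hw₀ 0 (zero_mem_V0 f)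
  refine ⟨fun β => w β / t, fun β hβ => div_nonneg (hw₀ β (Finset.mem_of_mem_erase hβ)) ht₀.le,
    ?_, ?_⟩
  · rw [← Finset.sum_div, div_lt_one ht₀]
    linarith
  · simp only [expEmbed_zero, smul_zero, zero_add] at hwα
    simp_rw [div_eq_inv_mul, mul_smul, ← Finset.smul_sum, hwα, smul_smul,
      inv_mul_cancel₀ ht₀.ne', one_smul]

lemma IsMinBary.Wfin_spec {lam : (Fin n →₀ ℕ) → (Fin n →₀ ℕ) → ℝ} (hlam : IsMinBary f lam)
    {α : Fin n →₀ ℕ} (hα : α ∈ V0c f) :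
    ∑ β ∈ Wfin f lam α, lam α β = 1 ∧
      ∑ β ∈ Wfin f lam α, lam α β • expEmbed β = expEmbed α := by
  obtain ⟨W, hWV, -, hpos, hzero, hW₁, hWα⟩ := hlam.2 α hα
  have hW : Wfin f lam α = W := by
    ext β
    refine ⟨fun hβ => ?_, fun hβ => Finset.mem_filter.2 ⟨hWV hβ, hpos β hβ⟩⟩
    obtain ⟨hβV, hβpos⟩ := Finset.mem_filter.1 hβ
    by_contra hβW
    exact hβpos.ne' (hzero β hβV hβW)
  exact hW ▸ ⟨hW₁, hWα⟩

/-- The vertices in the minimal representation of a gem degenerate `α` all lie on the face through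
`α` that avoids the origin. -/
lemma IsMinBary.Wfin_subset_Vinf {lam : (Fin n →₀ ℕ) → (Fin n →₀ ℕ) → ℝ}
    (hlam : IsMinBary f lam) {α : Fin n →₀ ℕ} (hα : α ∈ Dfin f) : Wfin f lam α ⊆ Vinf f := by
  obtain ⟨hW₁, hWα⟩ := hlam.Wfin_spec (Dfin_subset_V0c f hα)
  obtain ⟨-, -, G, -, hG, hG₀, hαG⟩ := (Finset.mem_filter.1 hα).2
  intro β hβ
  have hβV0 := (Finset.mem_filter.1 hβ).1
  have hβG : expEmbed β ∈ G :=
    hG.mem_of_sum_smul_mem (convex_convexHull ℝ _) (fun γ hγ => (Finset.mem_filter.1 hγ).2) hW₁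
      (fun γ hγ => expEmbed_mem_newtonInfty (Finset.filter_subset _ _ (Finset.mem_filter.1 hγ).1))
      (hWα ▸ hαG) hβ
  refine Finset.mem_erase.2 ⟨?_, hβV0⟩
  rintro rfl
  exact hG₀ (by simpa using hβG)

end NewtonPolytope

section VertexPart

variable {n : ℕ}

def absMonomial (α : Fin n →₀ ℕ) (x : Fin n → ℝ) : ℝ := ∏ i, |x i| ^ α i

/-- By (C1), the part of `f` carried by its vertices at infinity. -/
def vertexPart (f : MvPolynomial (Fin n) ℝ) (x : Fin n → ℝ) : ℝ :=
  ∑ α ∈ Vinf f, f.coeff α * absMonomial α x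

lemma absMonomial_nonneg (α : Fin n →₀ ℕ) (x : Fin n → ℝ) : 0 ≤ absMonomial α x := by
  unfold absMonomial; positivity

lemma abs_prod_pow_eq_absMonomial (α : Fin n →₀ ℕ) (x : Fin n → ℝ) :
    |∏ i, x i ^ α i| = absMonomial α x := by
  simp_rw [absMonomial, Finset.abs_prod, abs_pow]

lemma prod_pow_eq_absMonomial_of_even {α : Fin n →₀ ℕ} (hα : IsEvenExp α) (x : Fin n → ℝ) :
    ∏ i, x i ^ α i = absMonomial α x :=
  Finset.prod_congr rfl fun i _ => ((hα i).pow_abs _).symm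

lemma absMonomial_single (i : Fin n) (m : ℕ) (x : Fin n → ℝ) :
    absMonomial (Finsupp.single i m) x = |x i| ^ m := by
  simp [absMonomial, Finsupp.single_apply]

lemma absMonomial_eq_prod_rpow {s : Finset (Fin n →₀ ℕ)} {μ : (Fin n →₀ ℕ) → ℝ}
    (hμ : ∀ β ∈ s, 0 ≤ μ β) {α : Fin n →₀ ℕ} (hα : ∑ β ∈ s, μ β • expEmbed β = expEmbed α)
    (x : Fin n → ℝ) : absMonomial α x = ∏ β ∈ s, absMonomial β x ^ μ β := by
  have hcoord : ∀ i, (α i : ℝ) = ∑ β ∈ s, μ β * β i := fun i => by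
    simpa [expEmbed, Finset.sum_apply] using (congrFun hα i).symm
  calc absMonomial α x = ∏ i, ∏ β ∈ s, |x i| ^ (μ β * β i) := by
        refine Finset.prod_congr rfl fun i _ => ?_
        rw [← Real.rpow_natCast, hcoord i, Real.rpow_sum_of_nonneg (abs_nonneg _)
          fun β hβ => mul_nonneg (hμ β hβ) (Nat.cast_nonneg _)]
    _ = ∏ β ∈ s, absMonomial β x ^ μ β := by
        rw [Finset.prod_comm]
        refine Finset.prod_congr rfl fun β _ => ?_
        rw [absMonomial, ← Real.finsetProd_rpow _ _ fun i _ => by positivity]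
        refine Finset.prod_congr rfl fun i _ => ?_
        rw [← Real.rpow_natCast, ← Real.rpow_mul (abs_nonneg _), mul_comm]

variable {f : MvPolynomial (Fin n) ℝ}

lemma vertexPart_nonneg (hC2 : CondC2 f) (x : Fin n → ℝ) : 0 ≤ vertexPart f x :=
  Finset.sum_nonneg fun α hα => mul_nonneg (hC2 α hα).le (absMonomial_nonneg α x)

lemma sum_le_vertexPart (hC2 : CondC2 f) {s : Finset (Fin n →₀ ℕ)} (hs : s ⊆ Vinf f)
    (x : Fin n → ℝ) : ∑ α ∈ s, f.coeff α * absMonomial α x ≤ vertexPart f x :=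
  Finset.sum_le_sum_of_subset_of_nonneg hs fun α hα _ =>
    mul_nonneg (hC2 α hα).le (absMonomial_nonneg α x)

lemma exists_norm_le_mul_vertexPart_add_one (hC2 : CondC2 f) (hC3 : CondC3 f) :
    ∃ K > 0, ∀ x : Fin n → ℝ, ‖x‖ ≤ K * vertexPart f x + 1 := by
  choose k hk hkV using hC3
  set c : Fin n → ℝ := fun i => f.coeff (Finsupp.single i (2 * k i))
  have hc : ∀ i, 0 < c i := fun i => hC2 _ (hkV i)
  have hsum : 0 ≤ ∑ i, (c i)⁻¹ := Finset.sum_nonneg fun i _ => (inv_pos.2 (hc i)).le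
  refine ⟨1 + ∑ i, (c i)⁻¹, by linarith, fun x => ?_⟩
  have hS := vertexPart_nonneg hC2 x
  refine (pi_norm_le_iff_of_nonneg (by nlinarith)).2 fun i => ?_
  have hxi : |x i| ≤ |x i| ^ (2 * k i) + 1 := by
    rcases le_total |x i| 1 with h | h
    · linarith [pow_nonneg (abs_nonneg (x i)) (2 * k i)]
    · linarith [le_self_pow₀ h (by have := hk i; omega : 2 * k i ≠ 0)]
  have hterm : |x i| ^ (2 * k i) ≤ (c i)⁻¹ * vertexPart f x := by
    have := sum_le_vertexPart hC2 (Finset.singleton_subset_iff.2 (hkV i)) x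
    rw [Finset.sum_singleton, absMonomial_single] at this
    rw [inv_mul_eq_div, le_div_iff₀ (hc i)]
    linarith
  have hci : (c i)⁻¹ ≤ 1 + ∑ j, (c j)⁻¹ := by
    linarith [Finset.single_le_sum (fun j _ => (inv_pos.2 (hc j)).le) (Finset.mem_univ i)]
  rw [Real.norm_eq_abs]
  calc |x i| ≤ (c i)⁻¹ * vertexPart f x + 1 := by linarith
    _ ≤ (1 + ∑ j, (c j)⁻¹) * vertexPart f x + 1 := by gcongr

lemma tendsto_vertexPart (hC2 : CondC2 f) (hC3 : CondC3 f) :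
    Tendsto (vertexPart f) (comap (fun x : Fin n → ℝ => ‖x‖) atTop) atTop := by
  obtain ⟨K, hK, hx⟩ := exists_norm_le_mul_vertexPart_add_one hC2 hC3
  refine tendsto_atTop_mono (fun x => ?_)
    ((tendsto_atTop_add_const_right _ (-1) tendsto_comap).atTop_div_const hK)
  rw [div_le_iff₀' hK]
  linarith [hx x]

end VertexPart

section Coercivity

open Asymptotics

variable {n : ℕ} {f : MvPolynomial (Fin n) ℝ} {lam : (Fin n →₀ ℕ) → (Fin n →₀ ℕ) → ℝ}

lemma circuitNumber_pos (hC2 : CondC2 f) (hlam : IsMinBary f lam) {α : Fin n →₀ ℕ}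
    (hα : α ∈ Dfin f) : 0 < circuitNumber f lam α :=
  Finset.prod_pos fun β hβ => Real.rpow_pos_of_pos
    (div_pos (hC2 β (hlam.Wfin_subset_Vinf hα hβ)) (Finset.mem_filter.1 hβ).2) _

lemma circuitNumber_mul_absMonomial_le_vertexPart (hC2 : CondC2 f) (hlam : IsMinBary f lam)
    {α : Fin n →₀ ℕ} (hα : α ∈ Dfin f) (x : Fin n → ℝ) :
    circuitNumber f lam α * absMonomial α x ≤ vertexPart f x := by
  set W := Wfin f lam α
  obtain ⟨hW₁, hWα⟩ := hlam.Wfin_spec (Dfin_subset_V0c f hα)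
  have hWV := hlam.Wfin_subset_Vinf hα
  have hpos : ∀ β ∈ W, 0 < lam α β := fun β hβ => (Finset.mem_filter.1 hβ).2
  calc circuitNumber f lam α * absMonomial α x
      = ∏ β ∈ W, (f.coeff β * absMonomial β x / lam α β) ^ lam α β := by
        rw [circuitNumber, absMonomial_eq_prod_rpow (fun β hβ => (hpos β hβ).le) hWα,
          ← Finset.prod_mul_distrib]
        refine Finset.prod_congr rfl fun β hβ => ?_
        rw [← Real.mul_rpow (div_pos (hC2 β (hWV hβ)) (hpos β hβ)).le
          (absMonomial_nonneg β x), div_mul_eq_mul_div]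
    _ ≤ ∑ β ∈ W, f.coeff β * absMonomial β x :=
        Real.prod_div_rpow_le_sum hpos hW₁ fun β hβ =>
          mul_nonneg (hC2 β (hWV hβ)).le (absMonomial_nonneg β x)
    _ ≤ vertexPart f x := sum_le_vertexPart hC2 hWV x

/-- A term with even exponent can only be negative through its coefficient; one with an odd
exponent is bounded by its absolute value. -/
lemma mul_vertexPart_le_sum_Dfin (hC2 : CondC2 f) (hlam : IsMinBary f lam)
    (x : Fin n → ℝ) :
    ((∑ α ∈ (Dfin f).filter fun α => IsEvenExp α, min 0 (f.coeff α) / circuitNumber f lam α)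
      - ∑ α ∈ (Dfin f).filter fun α => ¬ IsEvenExp α, |f.coeff α| / circuitNumber f lam α)
      * vertexPart f x ≤ ∑ α ∈ Dfin f, f.coeff α * ∏ i, x i ^ α i := by
  have hbound : ∀ α ∈ Dfin f, absMonomial α x ≤ vertexPart f x / circuitNumber f lam α :=
    fun α hα => (le_div_iff₀' (circuitNumber_pos hC2 hlam hα)).2
      (circuitNumber_mul_absMonomial_le_vertexPart hC2 hlam hα x)
  rw [← Finset.sum_filter_add_sum_filter_not (Dfin f) fun α => IsEvenExp α, sub_mul,
    Finset.sum_mul, Finset.sum_mul, sub_eq_add_neg, ← Finset.sum_neg_distrib]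
  refine add_le_add (Finset.sum_le_sum fun α hα => ?_) (Finset.sum_le_sum fun α hα => ?_)
  · obtain ⟨hD, heven⟩ := Finset.mem_filter.1 hα
    rw [prod_pow_eq_absMonomial_of_even heven, div_mul_eq_mul_div, mul_div_assoc]
    calc min 0 (f.coeff α) * (vertexPart f x / circuitNumber f lam α)
        ≤ min 0 (f.coeff α) * absMonomial α x :=
          mul_le_mul_of_nonpos_left (hbound α hD) (min_le_left _ _)
      _ ≤ f.coeff α * absMonomial α x :=
          mul_le_mul_of_nonneg_right (min_le_right _ _) (absMonomial_nonneg α x)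
  · have hD := (Finset.mem_filter.1 hα).1
    rw [div_mul_eq_mul_div, mul_div_assoc, neg_le]
    calc -(f.coeff α * ∏ i, x i ^ α i) ≤ |f.coeff α| * absMonomial α x := by
          rw [← abs_prod_pow_eq_absMonomial, ← abs_mul]
          exact neg_le_abs _
      _ ≤ _ := mul_le_mul_of_nonneg_left (hbound α hD) (abs_nonneg _)

lemma exists_mul_absMonomial_le_vertexPart_rpow (hC2 : CondC2 f) {α : Fin n →₀ ℕ}
    (hα : α ∈ V0c f) (hreg : α ∉ Dfin f) :
    ∃ τ < (1 : ℝ), ∃ P > (0 : ℝ), ∀ x, P * absMonomial α x ≤ vertexPart f x ^ τ := by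
  obtain ⟨μ, hμ, hμ₁, hμα⟩ := exists_Vinf_weights_of_notMem_Dfin hα hreg
  refine ⟨_, hμ₁, ∏ β ∈ Vinf f, f.coeff β ^ μ β,
    Finset.prod_pos fun β hβ => Real.rpow_pos_of_pos (hC2 β hβ) _, fun x => ?_⟩
  rw [absMonomial_eq_prod_rpow hμ hμα, ← Finset.prod_mul_distrib]
  calc ∏ β ∈ Vinf f, f.coeff β ^ μ β * absMonomial β x ^ μ β
      = ∏ β ∈ Vinf f, (f.coeff β * absMonomial β x) ^ μ β :=
        Finset.prod_congr rfl fun β hβ =>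
          (Real.mul_rpow (hC2 β hβ).le (absMonomial_nonneg β x)).symm
    _ ≤ vertexPart f x ^ ∑ β ∈ Vinf f, μ β :=
        Real.prod_rpow_le_rpow_sum
          (fun β hβ => mul_nonneg (hC2 β hβ).le (absMonomial_nonneg β x)) hμ

lemma isLittleO_sum_V0c_sdiff_Dfin (hC2 : CondC2 f) {l : Filter (Fin n → ℝ)}
    (hS : Tendsto (vertexPart f) l atTop) :
    (fun x => ∑ α ∈ V0c f \ Dfin f, f.coeff α * ∏ i, x i ^ α i) =o[l] vertexPart f := by
  refine IsLittleO.fun_sum fun α hα => ?_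
  obtain ⟨hV0c, hreg⟩ := Finset.mem_sdiff.1 hα
  obtain ⟨τ, hτ, P, hP, hbound⟩ := exists_mul_absMonomial_le_vertexPart_rpow hC2 hV0c hreg
  have hbigO : (fun x => f.coeff α * ∏ i, x i ^ α i) =O[l] fun x => vertexPart f x ^ τ := by
    refine IsBigO.of_bound (|f.coeff α| / P) (Eventually.of_forall fun x => ?_)
    rw [Real.norm_eq_abs, Real.norm_eq_abs, abs_mul, abs_prod_pow_eq_absMonomial,
      abs_of_nonneg (Real.rpow_nonneg (vertexPart_nonneg hC2 x) τ), div_mul_eq_mul_div,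
      le_div_iff₀ hP, mul_assoc]
    exact mul_le_mul_of_nonneg_left (by linarith [hbound x]) (abs_nonneg _)
  exact hbigO.trans_isLittleO ((Real.isLittleO_rpow_id_atTop hτ).comp_tendsto hS)

lemma eval_eq_coeff_zero_add_vertexPart_add (hC1 : CondC1 f) (x : Fin n → ℝ) :
    eval x f = f.coeff 0 + vertexPart f x + ∑ α ∈ Dfin f, f.coeff α * ∏ i, x i ^ α i
      + ∑ α ∈ V0c f \ Dfin f, f.coeff α * ∏ i, x i ^ α i := by
  have hV0 : V0 f ⊆ insert 0 f.support := Finset.filter_subset _ _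
  have hV0c : insert 0 f.support \ V0 f = V0c f := Finset.insert_sdiff_of_mem _ (zero_mem_V0 f)
  rw [eval_eq', Finset.sum_subset (Finset.subset_insert 0 f.support) fun α _ hα => by
      rw [notMem_support_iff.1 hα, zero_mul],
    ← Finset.sum_sdiff hV0, hV0c,
    ← Finset.sum_sdiff (Dfin_subset_V0c f), V0_eq_insert_Vinf,
    Finset.sum_insert (zero_notMem_Vinf f)]
  have hvertex : ∑ α ∈ Vinf f, f.coeff α * ∏ i, x i ^ α i = vertexPart f x :=
    Finset.sum_congr rfl fun α hα => by rw [prod_pow_eq_absMonomial_of_even (hC1 α hα)]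
  simp only [hvertex, Finsupp.coe_zero, Pi.zero_apply, pow_zero, Finset.prod_const_one, mul_one]
  ring

end Coercivity

/-- Theorem: restated sufficient condition for coercivity via the
posynomial inequality in the circuit numbers. -/
theorem stmt2 {n : ℕ} (f : MvPolynomial (Fin n) ℝ)
    (hC1 : CondC1 f) (hC2 : CondC2 f) (hC3 : CondC3 f)
    (lam : (Fin n →₀ ℕ) → (Fin n →₀ ℕ) → ℝ) (hlam : IsMinBary f lam)
    (hineq : (∑ αs ∈ (Dfin f).filter fun αs => ¬ IsEvenExp αs,
          |f.coeff αs| / circuitNumber f lam αs)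
        - (∑ αs ∈ (Dfin f).filter fun αs => IsEvenExp αs,
          min 0 (f.coeff αs) / circuitNumber f lam αs) < 1) :
    Coercive fun x => MvPolynomial.eval x f := by
  set c := (∑ αs ∈ (Dfin f).filter fun αs => ¬ IsEvenExp αs,
      |f.coeff αs| / circuitNumber f lam αs)
    - ∑ αs ∈ (Dfin f).filter fun αs => IsEvenExp αs, min 0 (f.coeff αs) / circuitNumber f lam αs
  set R := fun x : Fin n → ℝ => ∑ α ∈ V0c f \ Dfin f, f.coeff α * ∏ i, x i ^ α i
  have hS := tendsto_vertexPart hC2 hC3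
  have hlow : ∀ x, f.coeff 0 + ((1 - c) * vertexPart f x + R x) ≤ eval x f := fun x => by
    rw [eval_eq_coeff_zero_add_vertexPart_add hC1 x]
    linarith [mul_vertexPart_le_sum_Dfin hC2 hlam x]
  exact tendsto_atTop_mono hlow (tendsto_atTop_add_const_left _ _
    (hS.mul_add_isLittleO_atTop (sub_pos.2 hineq) (isLittleO_sum_V0c_sdiff_Dfin hC2 hS)))

end
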